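/- The set of (2n+2)×(2n+2) real matrices Ω(δ,Σ,z,ι) with block form [[δΣ, 0, z], [−δ zᵗζΣ, δ², 2ι], [0, 0, 1]], where δ ∈ ℝ∖{0}, Σ symplectic (Σᵗζ Σ = ζ), z ∈ ℝ^{2n}, ι ∈ ℝ, is closed under matrix multiplication, with product Ω(δ',Σ',z',ι')Ω(δ,Σ,z,ι) = Ω(δ'δ, Σ'Σ, z'+δ'Σ'z, ι'+δ'²ι−½δ' z'ᵗζΣ'z). -/
import Mathlib


open Matrix

/-- The standard 2n×2n symplectic matrix ζ = [[0,1ₙ],[−1ₙ,0]]. -/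
def zeta (n : ℕ) : Matrix (Fin (2 * n)) (Fin (2 * n)) ℝ :=
  Matrix.of fun i j => if i.val + n = j.val then 1 else if j.val + n = i.val then -1 else 0

/-- The (2n+2)×(2n+2) matrix Ω(δ,Σ,z,ι) with block form
[[δΣ, 0, z], [−δ zᵗζΣ, δ², 2ι], [0, 0, 1]]. -/
noncomputable def Omega (n : ℕ) (δ : ℝ) (S : Matrix (Fin (2 * n)) (Fin (2 * n)) ℝ)
    (z : Fin (2 * n) → ℝ) (ι : ℝ) :
    Matrix (Fin (2 * n) ⊕ Fin 2) (Fin (2 * n) ⊕ Fin 2) ℝ :=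
  Matrix.fromBlocks (δ • S)
    (Matrix.of fun i j => if j = 0 then 0 else z i)
    (Matrix.of fun i j => if i = 0 then -δ * (z ᵥ* (zeta n * S)) j else 0)
    (Matrix.of fun i j =>
      if i = 0 then (if j = 0 then δ ^ 2 else 2 * ι)
      else (if j = 0 then 0 else 1))

/-- The matrices Ω(δ,Σ,z,ι), δ ≠ 0, Σ symplectic, are closed under matrix
multiplication, with
Ω(δ',Σ',z',ι')Ω(δ,Σ,z,ι) = Ω(δ'δ, Σ'Σ, z'+δ'Σ'z, ι'+δ'²ι−½δ' z'ᵗζΣ'z). -/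
theorem Omega_mul (n : ℕ) (δ' δ : ℝ) (S' S : Matrix (Fin (2 * n)) (Fin (2 * n)) ℝ)
    (z' z : Fin (2 * n) → ℝ) (ι' ι : ℝ)
    (hδ' : δ' ≠ 0) (hδ : δ ≠ 0)
    (hS' : S'ᵀ * zeta n * S' = zeta n) (hS : Sᵀ * zeta n * S = zeta n) :
    δ' * δ ≠ 0 ∧
    (S' * S)ᵀ * zeta n * (S' * S) = zeta n ∧
    Omega n δ' S' z' ι' * Omega n δ S z ι =
      Omega n (δ' * δ) (S' * S) (z' + δ' • (S' *ᵥ z))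
        (ι' + δ' ^ 2 * ι - δ' / 2 * (z' ⬝ᵥ (zeta n *ᵥ (S' *ᵥ z)))) := by
  have hmv : S' *ᵥ z = z ᵥ* S'ᵀ := by rw [vecMul_transpose]
  have hM : S'ᵀ * (zeta n * (S' * S)) = zeta n * S := by
    calc S'ᵀ * (zeta n * (S' * S)) = (S'ᵀ * zeta n * S') * S := by noncomm_ring
    _ = zeta n * S := by rw [hS']
  have hsymp : (S' *ᵥ z) ᵥ* (zeta n * (S' * S)) = z ᵥ* (zeta n * S) := by
    rw [hmv, vecMul_vecMul, hM]
  have hw : (z' + δ' • (S' *ᵥ z)) ᵥ* (zeta n * (S' * S))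
      = (z' ᵥ* (zeta n * S')) ᵥ* S + δ' • (z ᵥ* (zeta n * S)) := by
    rw [add_vecMul, Matrix.smul_vecMul, hsymp, vecMul_vecMul, Matrix.mul_assoc]
  have hd : (z' ᵥ* (zeta n * S')) ⬝ᵥ z = z' ⬝ᵥ (zeta n *ᵥ (S' *ᵥ z)) := by
    rw [mulVec_mulVec, dotProduct_mulVec]
  refine ⟨mul_ne_zero hδ' hδ, ?_, ?_⟩
  · calc (S' * S)ᵀ * zeta n * (S' * S) = Sᵀ * (S'ᵀ * zeta n * S') * S := by
          rw [Matrix.transpose_mul]; noncomm_ring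
      _ = zeta n := by rw [hS']; exact hS
  · unfold Omega
    rw [Matrix.fromBlocks_multiply, Matrix.fromBlocks_inj]
    refine ⟨?_, ?_, ?_, ?_⟩
    · ext i j
      simp [Matrix.mul_apply, Fin.sum_univ_two, Finset.mul_sum, mul_comm, mul_left_comm]
    · ext i j
      fin_cases j <;>
        simp [Matrix.mul_apply, Fin.sum_univ_two, Matrix.mulVec, dotProduct,
          Finset.mul_sum, mul_comm, add_comm]
    · ext i j
      fin_cases i
      · have h1 : ((z' + δ' • (S' *ᵥ z)) ᵥ* (zeta n * (S' * S))) j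
            = ((z' ᵥ* (zeta n * S')) ᵥ* S) j + δ' * (z ᵥ* (zeta n * S)) j := by
          rw [hw]; simp
        have e1 : ((z' ᵥ* (zeta n * S')) ᵥ* S) j
            = ∑ k, (z' ᵥ* (zeta n * S')) k * S k j := rfl
        have h2 : ∑ k, δ' * (z' ᵥ* (zeta n * S')) k * S k j
            = δ' * ((z' ᵥ* (zeta n * S')) ᵥ* S) j := by
          rw [e1, Finset.mul_sum]
          exact Finset.sum_congr rfl fun k _ => by ring
        simp [Matrix.mul_apply, Fin.sum_univ_two]
        linear_combination -δ * h2 + δ' * δ * h1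
      · simp [Matrix.mul_apply, Fin.sum_univ_two]
    · ext i j
      have h2 : ∑ k, δ' * (z' ᵥ* (zeta n * S')) k * z k
          = δ' * ((z' ᵥ* (zeta n * S')) ⬝ᵥ z) := by
        rw [dotProduct, Finset.mul_sum]
        exact Finset.sum_congr rfl fun k _ => by ring
      fin_cases i <;> fin_cases j <;>
        simp [Matrix.mul_apply, Fin.sum_univ_two]
      · ring
      · linear_combination -h2 + δ' * (dotProduct_mulVec z' (zeta n * S') z)
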